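/- arXiv:2206.06855 — 2 statements merged into one kernel-verified Lean document; each statement's English description precedes it below -/
import Mathlib

section
/- Let E be a bounded open set of ℝ^N and p > 1. Let (v_n) be a sequence bounded in L^p(E) and v ∈ L^p(E) such that for all k > 0, the truncations T_k(v_n) converge to T_k(v) strongly in L^p(E), where T_k(s) = min(k,|s|)·sign(s). Then v_n converges to v strongly in L^q(E) for all q ∈ [1, p). -/
open MeasureTheory Filter Real
open scoped ENNReal NNReal

/-- Truncation at level `k`: `T_k(s) = min(k, |s|) · sign(s)`. -/
noncomputable def trunc (k : ℝ) (s : ℝ) : ℝ := min k |s| * Real.sign s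

lemma trunc_eq_clamp {k : ℝ} (hk : 0 ≤ k) (s : ℝ) :
    trunc k s = max (-k) (min k s) := by
  unfold trunc
  rcases lt_trichotomy s 0 with h | h | h
  · rw [Real.sign_of_neg h, abs_of_neg h]
    rcases le_total k (-s) with h2 | h2
    · rw [min_eq_left h2, min_eq_right (by linarith), max_eq_left (by linarith)]; ring
    · rw [min_eq_right h2, min_eq_right (by linarith), max_eq_right (by linarith)]; ring
  · simp [h, min_eq_right hk, max_eq_right (neg_nonpos.mpr hk)]
  · rw [Real.sign_of_pos h, abs_of_pos h, mul_one,
      max_eq_right (le_trans (neg_nonpos.mpr hk) (le_min hk h.le))]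

lemma trunc_eq_self {k s : ℝ} (hk : 0 ≤ k) (h : |s| ≤ k) : trunc k s = s := by
  rw [trunc_eq_clamp hk, min_eq_right (abs_le.mp h).2, max_eq_right (abs_le.mp h).1]

lemma abs_sub_trunc_le {k : ℝ} (hk : 0 ≤ k) (s : ℝ) : |s - trunc k s| ≤ |s| := by
  rw [trunc_eq_clamp hk]
  rcases le_total 0 s with h | h
  · rw [abs_of_nonneg h]
    have h1 : max (-k) (min k s) ≤ s := max_le (by linarith) (min_le_right _ _)
    have h2 : 0 ≤ max (-k) (min k s) := le_max_of_le_right (le_min hk h)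
    rw [abs_of_nonneg (by linarith)]; linarith
  · rw [abs_of_nonpos h]
    have h1 : s ≤ max (-k) (min k s) := le_max_of_le_right (le_min (by linarith) le_rfl)
    have h2 : max (-k) (min k s) ≤ 0 := max_le (by linarith) (le_trans (min_le_right _ _) h)
    rw [abs_of_nonpos (by linarith)]; linarith

lemma pointwise_tail {p q k : ℝ} (hq : 0 < q) (hqp : q ≤ p) (hk : 0 < k) (s : ℝ) :
    |s - trunc k s| ^ q ≤ k ^ (q - p) * |s| ^ p := by
  rcases le_or_gt |s| k with h | h
  · rw [trunc_eq_self hk.le h, sub_self, abs_zero, Real.zero_rpow hq.ne']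
    positivity
  · have hs : 0 < |s| := lt_trans hk h
    calc |s - trunc k s| ^ q ≤ |s| ^ q :=
          Real.rpow_le_rpow (abs_nonneg _) (abs_sub_trunc_le hk.le s) hq.le
    _ = 1 * |s| ^ q := (one_mul _).symm
    _ = (k ^ (q-p) * k ^ (p-q)) * |s| ^ q := by
        rw [← Real.rpow_add hk]; norm_num
    _ ≤ (k ^ (q-p) * |s| ^ (p-q)) * |s| ^ q := by
        refine mul_le_mul_of_nonneg_right (mul_le_mul_of_nonneg_left
          (Real.rpow_le_rpow hk.le h.le (by linarith)) ?_) ?_ <;> positivity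
    _ = k ^ (q-p) * |s| ^ p := by
        rw [mul_assoc, ← Real.rpow_add hs]; ring_nf

lemma eLpNorm_tail {α : Type*} [MeasurableSpace α] (μ : Measure α) {p q k : ℝ}
    (hq : 0 < q) (hqp : q ≤ p) (hk : 0 < k) (f : α → ℝ) :
    eLpNorm (fun x => f x - trunc k (f x)) (ENNReal.ofReal q) μ ≤
      ENNReal.ofReal (k ^ ((q - p)/q)) * (eLpNorm f (ENNReal.ofReal p) μ) ^ (p / q) := by
  have hp : 0 < p := lt_of_lt_of_le hq hqp
  have hqne : ENNReal.ofReal q ≠ 0 := (ENNReal.ofReal_pos.mpr hq).ne'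
  have hpne : ENNReal.ofReal p ≠ 0 := (ENNReal.ofReal_pos.mpr hp).ne'
  rw [eLpNorm_eq_lintegral_rpow_enorm_toReal hqne ENNReal.ofReal_ne_top,
    eLpNorm_eq_lintegral_rpow_enorm_toReal hpne ENNReal.ofReal_ne_top,
    ENNReal.toReal_ofReal hq.le, ENNReal.toReal_ofReal hp.le]
  have key : (∫⁻ x, (‖f x - trunc k (f x)‖₊ : ℝ≥0∞) ^ q ∂μ) ≤
      ENNReal.ofReal (k ^ (q - p)) * ∫⁻ x, (‖f x‖₊ : ℝ≥0∞) ^ p ∂μ := by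
    rw [← lintegral_const_mul' _ _ ENNReal.ofReal_ne_top]
    refine lintegral_mono fun x => ?_
    have e1 : ((‖f x - trunc k (f x)‖₊ : ℝ≥0∞)) ^ q
        = ENNReal.ofReal (|f x - trunc k (f x)| ^ q) := by
      rw [← enorm_eq_nnnorm, ← ofReal_norm, Real.norm_eq_abs,
        ← ENNReal.ofReal_rpow_of_nonneg (abs_nonneg _) hq.le]
    have e2 : ((‖f x‖₊ : ℝ≥0∞)) ^ p = ENNReal.ofReal (|f x| ^ p) := by
      rw [← enorm_eq_nnnorm, ← ofReal_norm, Real.norm_eq_abs,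
        ← ENNReal.ofReal_rpow_of_nonneg (abs_nonneg _) hp.le]
    rw [e1, e2, ← ENNReal.ofReal_mul (by positivity)]
    exact ENNReal.ofReal_le_ofReal (pointwise_tail hq hqp hk _)
  calc (∫⁻ x, (‖f x - trunc k (f x)‖₊ : ℝ≥0∞) ^ q ∂μ) ^ (1/q)
      ≤ (ENNReal.ofReal (k ^ (q - p)) * ∫⁻ x, (‖f x‖₊ : ℝ≥0∞) ^ p ∂μ) ^ (1/q) :=
        ENNReal.rpow_le_rpow key (by positivity)
    _ = ENNReal.ofReal (k ^ (q - p)) ^ (1/q) *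
        ((∫⁻ x, (‖f x‖₊ : ℝ≥0∞) ^ p ∂μ)) ^ (1/q) :=
        ENNReal.mul_rpow_of_nonneg _ _ (by positivity)
    _ = ENNReal.ofReal (k ^ ((q - p)/q)) *
        ((∫⁻ x, (‖f x‖₊ : ℝ≥0∞) ^ p ∂μ) ^ (1/p)) ^ (p/q) := by
        rw [← ENNReal.rpow_mul, ENNReal.ofReal_rpow_of_nonneg (by positivity) (by positivity),
          ← Real.rpow_mul hk.le]
        rw [show (q - p) * (1/q) = (q-p)/q by ring, show (1/p) * (p/q) = 1/q by
          field_simp]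


/-- If `(vₙ)` is bounded in `Lᵖ(E)` (for a bounded open set `E ⊆ ℝᴺ`, `p > 1`),
`v ∈ Lᵖ(E)`, and for each `k > 0` the truncations `T_k(vₙ)` converge to `T_k(v)`
strongly in `Lᵖ(E)`, then `vₙ → v` strongly in `L^q(E)` for every `q ∈ [1, p)`. -/
theorem strong_convergence_of_truncations
    {N : ℕ} (hN : 1 ≤ N) (E : Set (EuclideanSpace ℝ (Fin N)))
    (hEopen : IsOpen E) (hEbdd : Bornology.IsBounded E)
    (p : ℝ) (hp : 1 < p)
    (v : ℕ → EuclideanSpace ℝ (Fin N) → ℝ) (w : EuclideanSpace ℝ (Fin N) → ℝ)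
    (hmeas : ∀ n, AEStronglyMeasurable (v n) (volume.restrict E))
    (hwLp : MemLp w (ENNReal.ofReal p) (volume.restrict E))
    (hbdd : ∃ C : ℝ≥0∞, C < ⊤ ∧ ∀ n,
      eLpNorm (v n) (ENNReal.ofReal p) (volume.restrict E) ≤ C)
    (htrunc : ∀ k : ℝ, 0 < k →
      Tendsto (fun n => eLpNorm (fun x => trunc k (v n x) - trunc k (w x))
        (ENNReal.ofReal p) (volume.restrict E)) atTop (nhds 0)) :
    ∀ q : ℝ, 1 ≤ q → q < p →
      Tendsto (fun n => eLpNorm (fun x => v n x - w x)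
        (ENNReal.ofReal q) (volume.restrict E)) atTop (nhds 0) := by
  intro q hq1 hqp
  obtain ⟨C, hCt, hbC⟩ := hbdd
  set μ := volume.restrict E with hμdef
  have hq0 : (0:ℝ) < q := by linarith
  have hp0 : (0:ℝ) < p := by linarith
  have hqle : q ≤ p := hqp.le
  have hμuniv : μ Set.univ < ⊤ := by
    rw [hμdef, Measure.restrict_apply_univ]
    exact hEbdd.measure_lt_top
  set D : ℝ≥0∞ := max (C ^ (p/q)) ((eLpNorm w (ENNReal.ofReal p) μ) ^ (p/q)) with hD
  have hDt : D ≠ ⊤ := by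
    rw [hD]
    apply (max_lt (ENNReal.rpow_lt_top_of_nonneg (div_nonneg hp0.le hq0.le) hCt.ne)
      (ENNReal.rpow_lt_top_of_nonneg (div_nonneg hp0.le hq0.le) hwLp.2.ne)).ne
  rw [ENNReal.tendsto_nhds_zero]
  intro ε hε
  have hε3 : 0 < ε / 3 := ENNReal.div_pos hε.ne' (by norm_num)
  -- choose k
  have hk_tendsto : Tendsto (fun k : ℝ => ENNReal.ofReal (k ^ ((q-p)/q)) * D)
      atTop (nhds 0) := by
    have h1 : Tendsto (fun k : ℝ => k ^ ((q-p)/q)) atTop (nhds 0) := by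
      rw [show (q-p)/q = -((p-q)/q) by ring]
      exact tendsto_rpow_neg_atTop (div_pos (by linarith) hq0)
    have h2 := ENNReal.tendsto_ofReal h1
    rw [ENNReal.ofReal_zero] at h2
    simpa using ENNReal.Tendsto.mul_const h2 (Or.inr hDt)
  obtain ⟨k, hk1, hkle⟩ : ∃ k : ℝ, 1 ≤ k ∧ ENNReal.ofReal (k ^ ((q-p)/q)) * D ≤ ε/3 :=
    ((eventually_ge_atTop 1).and (hk_tendsto.eventually_le_const hε3)).exists
  have hk0 : (0:ℝ) < k := by linarith
  -- continuity/measurability of trunc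
  have htc : Continuous (trunc k) := by
    have : trunc k = fun s => max (-k) (min k s) := funext (trunc_eq_clamp hk0.le)
    rw [this]
    exact continuous_const.max (continuous_const.min continuous_id)
  have hone : (1 : ℝ≥0∞) ≤ ENNReal.ofReal q := ENNReal.one_le_ofReal.mpr hq1
  -- tail bounds
  have htail_v : ∀ n, eLpNorm (fun x => v n x - trunc k (v n x)) (ENNReal.ofReal q) μ
      ≤ ε/3 := by
    intro n
    refine le_trans (eLpNorm_tail μ hq0 hqle hk0 (v n)) (le_trans ?_ hkle)
    refine mul_le_mul_right (le_trans (ENNReal.rpow_le_rpow (hbC n) (div_nonneg hp0.le hq0.le)) ?_) _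
    exact le_max_left _ _
  have htail_w : eLpNorm (fun x => trunc k (w x) - w x) (ENNReal.ofReal q) μ
      ≤ ε/3 := by
    have : eLpNorm (fun x => trunc k (w x) - w x) (ENNReal.ofReal q) μ
        = eLpNorm (fun x => w x - trunc k (w x)) (ENNReal.ofReal q) μ := by
      rw [show (fun x => trunc k (w x) - w x) = -(fun x => w x - trunc k (w x)) by
        funext x; simp, eLpNorm_neg]
    rw [this]
    refine le_trans (eLpNorm_tail μ hq0 hqle hk0 w) (le_trans ?_ hkle)
    exact mul_le_mul_right (le_max_right _ _) _
  -- middle term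
  set M : ℝ≥0∞ := μ Set.univ ^ (1/(ENNReal.ofReal q).toReal - 1/(ENNReal.ofReal p).toReal)
    with hM
  have hMt : M ≠ ⊤ := by
    rw [hM]
    apply (ENNReal.rpow_lt_top_of_nonneg ?_ hμuniv.ne).ne
    rw [ENNReal.toReal_ofReal hq0.le, ENNReal.toReal_ofReal hp0.le]
    rw [sub_nonneg]
    exact one_div_le_one_div_of_le hq0 hqle
  have hmid : ∀ᶠ n in atTop,
      eLpNorm (fun x => trunc k (v n x) - trunc k (w x)) (ENNReal.ofReal q) μ ≤ ε/3 := by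
    have h1 : Tendsto (fun n => eLpNorm (fun x => trunc k (v n x) - trunc k (w x))
        (ENNReal.ofReal p) μ * M) atTop (nhds 0) := by
      simpa using ENNReal.Tendsto.mul_const (htrunc k hk0) (Or.inr hMt)
    filter_upwards [h1.eventually_le_const hε3] with n hn
    refine le_trans ?_ hn
    exact eLpNorm_le_eLpNorm_mul_rpow_measure_univ (ENNReal.ofReal_le_ofReal hqle)
      ((htc.comp_aestronglyMeasurable (hmeas n)).sub
        (htc.comp_aestronglyMeasurable hwLp.1))
  filter_upwards [hmid] with n hn
  have hsplit : (fun x => v n x - w x) =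
      (fun x => v n x - trunc k (v n x)) +
      ((fun x => trunc k (v n x) - trunc k (w x)) + (fun x => trunc k (w x) - w x)) := by
    funext x; simp only [Pi.add_apply]; ring
  have m1 : AEStronglyMeasurable (fun x => v n x - trunc k (v n x)) μ :=
    (hmeas n).sub (htc.comp_aestronglyMeasurable (hmeas n))
  have m2 : AEStronglyMeasurable (fun x => trunc k (v n x) - trunc k (w x)) μ :=
    (htc.comp_aestronglyMeasurable (hmeas n)).sub (htc.comp_aestronglyMeasurable hwLp.1)
  have m3 : AEStronglyMeasurable (fun x => trunc k (w x) - w x) μ :=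
    (htc.comp_aestronglyMeasurable hwLp.1).sub hwLp.1
  calc eLpNorm (fun x => v n x - w x) (ENNReal.ofReal q) μ
      ≤ eLpNorm (fun x => v n x - trunc k (v n x)) (ENNReal.ofReal q) μ +
        eLpNorm ((fun x => trunc k (v n x) - trunc k (w x)) +
          (fun x => trunc k (w x) - w x)) (ENNReal.ofReal q) μ := by
        rw [hsplit]
        exact eLpNorm_add_le m1 (m2.add m3) hone
    _ ≤ ε/3 + (eLpNorm (fun x => trunc k (v n x) - trunc k (w x)) (ENNReal.ofReal q) μ +
        eLpNorm (fun x => trunc k (w x) - w x) (ENNReal.ofReal q) μ) :=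
        add_le_add (htail_v n) (eLpNorm_add_le m2 m3 hone)
    _ ≤ ε/3 + (ε/3 + ε/3) := add_le_add le_rfl (add_le_add hn htail_w)
    _ = 3 * (ε/3) := by ring
    _ ≤ ε := ENNReal.mul_div_le
end

section
/- Let ψ(s) = sign(s)·ln(1+|s|)/(1+ln(1+|s|)) and β(s) = ∫₀^s √(ψ'(t)) dt. Then for every q ∈ (0, 1/2) and every s ∈ ℝ, one has (1-2q)((1+|s|)^q − 1) ≤ |β(s)|. -/
open Real intervalIntegral

/-- `ψ(s) = sign(s) · ln(1+|s|)/(1+ln(1+|s|))`. -/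
noncomputable def psi (s : ℝ) : ℝ :=
  Real.sign s * (Real.log (1 + |s|) / (1 + Real.log (1 + |s|)))

/-- The derivative of `ψ`: `ψ'(t) = 1/((1+|t|)(1+ln(1+|t|))²)`. -/
noncomputable def psiDeriv (t : ℝ) : ℝ :=
  1 / ((1 + |t|) * (1 + Real.log (1 + |t|)) ^ 2)

/-- `β(s) = ∫₀ˢ √(ψ'(t)) dt`. -/
noncomputable def beta (s : ℝ) : ℝ := ∫ t in (0 : ℝ)..s, Real.sqrt (psiDeriv t)

lemma sqrt_psiDeriv_cont : Continuous fun t : ℝ => Real.sqrt (psiDeriv t) := by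
  apply Continuous.sqrt
  unfold psiDeriv
  have hlog : Continuous fun t : ℝ => Real.log (1 + |t|) := by
    apply (continuous_const.add continuous_abs).log
    intro t
    have := abs_nonneg t
    exact (by linarith : (0:ℝ) < 1 + |t|).ne'
  apply Continuous.div continuous_const
  · exact (continuous_const.add continuous_abs).mul ((continuous_const.add hlog).pow 2)
  · intro t
    have h1 := abs_nonneg t
    have h2 := Real.log_nonneg (by linarith : (1:ℝ) ≤ 1 + |t|)
    positivity

lemma pointwise (q : ℝ) (hq0 : 0 < q) (hq : q < 1/2) {t : ℝ} (ht : 0 ≤ t) :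
    (1 - 2*q) * (q * (1+t) ^ (q-1)) ≤ Real.sqrt (psiDeriv t) := by
  have h1t : (0:ℝ) < 1 + t := by linarith
  have hL : 0 ≤ Real.log (1+t) := Real.log_nonneg (by linarith)
  set L := Real.log (1+t) with hLdef
  have habs : |t| = t := abs_of_nonneg ht
  have hsqpos : 0 < Real.sqrt (1+t) := Real.sqrt_pos.mpr h1t
  have h1L : (0:ℝ) < 1 + L := by linarith
  have hsq : Real.sqrt (psiDeriv t) = 1 / (Real.sqrt (1+t) * (1+L)) := by
    rw [psiDeriv, habs]
    rw [one_div, Real.sqrt_inv, Real.sqrt_mul h1t.le, Real.sqrt_sq h1L.le, one_div]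
  rw [hsq, le_div_iff₀ (by positivity)]
  have hprod : Real.sqrt (1+t) * ((1+t)^(q-1)) = (1+t)^(q - 1/2) := by
    rw [Real.sqrt_eq_rpow, ← Real.rpow_add h1t]; congr 1; ring
  have hexp : (1+t) ^ (q - 1/2) = Real.exp (L * (q - 1/2)) := Real.rpow_def_of_pos h1t _
  have hE : Real.exp (L * (q - 1/2)) = (Real.exp ((1/2 - q) * L))⁻¹ := by
    rw [← Real.exp_neg]; ring_nf
  have hkey : (1 - 2*q) * q * (1+L) ≤ Real.exp ((1/2 - q) * L) := by
    have h := Real.add_one_le_exp ((1/2 - q) * L)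
    nlinarith [mul_nonneg hL (sq_nonneg (q - 1/2)), sq_nonneg (q - 1/4)]
  have heq : (1 - 2*q) * (q * (1+t)^(q-1)) * (Real.sqrt (1+t) * (1+L))
      = (1-2*q)*q*(1+L) * ((1+t)^(q-1/2)) := by
    rw [← hprod]; ring
  rw [heq, hexp, hE, ← div_eq_mul_inv, div_le_one (Real.exp_pos _)]
  exact hkey

lemma beta_lb (q : ℝ) (hq0 : 0 < q) (hq : q < 1/2) {s : ℝ} (hs : 0 ≤ s) :
    (1 - 2*q) * ((1+s)^q - 1) ≤ beta s := by
  have hcont : ContinuousOn (fun t : ℝ => (1+t)^(q-1)) (Set.Icc 0 s) := by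
    apply ContinuousOn.rpow_const (by fun_prop)
    intro t ht
    exact Or.inl (by nlinarith [ht.1] : (1:ℝ) + t ≠ 0)
  have hint : ∫ t in (0:ℝ)..s, (1+t)^(q-1) = ((1+s)^q - 1)/q := by
    have h := intervalIntegral.integral_comp_add_left (a := (0:ℝ)) (b := s)
      (fun u : ℝ => u ^ (q-1)) 1
    rw [h, add_zero, integral_rpow (Or.inl (by linarith : (-1:ℝ) < q - 1))]
    rw [Real.one_rpow]
    ring_nf
  have hmono : ∫ t in (0:ℝ)..s, (1-2*q) * (q * (1+t)^(q-1)) ≤ beta s := by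
    apply intervalIntegral.integral_mono_on hs
    · have hc2 : ContinuousOn (fun t : ℝ => (1-2*q) * (q * (1+t)^(q-1))) (Set.uIcc 0 s) := by
        rw [Set.uIcc_of_le hs]
        exact continuousOn_const.mul (continuousOn_const.mul hcont)
      exact hc2.intervalIntegrable
    · exact (sqrt_psiDeriv_cont.intervalIntegrable 0 s)
    · intro t ht
      exact pointwise q hq0 hq ht.1
  calc (1 - 2*q) * ((1+s)^q - 1)
      = ∫ t in (0:ℝ)..s, (1-2*q) * (q * (1+t)^(q-1)) := by
        rw [intervalIntegral.integral_const_mul, intervalIntegral.integral_const_mul, hint]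
        field_simp
    _ ≤ beta s := hmono

lemma beta_neg (s : ℝ) : beta (-s) = - beta s := by
  unfold beta
  have heven : ∀ t : ℝ, Real.sqrt (psiDeriv (-t)) = Real.sqrt (psiDeriv t) := by
    intro t; rw [psiDeriv, psiDeriv, abs_neg]
  rw [show (∫ t in (0:ℝ)..(-s), Real.sqrt (psiDeriv t))
      = ∫ t in (0:ℝ)..(-s), Real.sqrt (psiDeriv (-t)) by
        simp only [heven]]
  rw [intervalIntegral.integral_comp_neg (fun t => Real.sqrt (psiDeriv t))]
  rw [neg_zero, neg_neg]
  exact intervalIntegral.integral_symm 0 s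

/-- For every `q ∈ (0, 1/2)` and every `s ∈ ℝ`,
`(1-2q)((1+|s|)^q − 1) ≤ |β(s)|`. -/
theorem beta_lower_bound (q s : ℝ) (hq0 : 0 < q) (hq : q < 1 / 2) :
    (1 - 2 * q) * ((1 + |s|) ^ q - 1) ≤ |beta s| := by
  have h := beta_lb q hq0 (by linarith) (abs_nonneg s)
  refine h.trans ?_
  rcases le_or_gt 0 s with hs | hs
  · rw [abs_of_nonneg hs]; exact le_abs_self _
  · rw [abs_of_neg hs, beta_neg]; exact neg_le_abs _
end
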